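/- For every D ⊆ E admitting a d-flow and every e ∈ E such that D contains exactly one of e and rev e (i.e. |D ∩ {e, rev e}| = 1), it holds that φ_e(ψ_e(D)) = D. -/

import Mathlib

open Finset

section Defs

variable {V : Type*}

/-- Reversal of a directed edge. -/
def drev (e : V × V) : V × V := (e.2, e.1)

/-- `K` is a subgraph of the (symmetric) edge set `E`: it contains either both or
neither of `e` and `drev e` for every `e ∈ E`. -/
def IsSubgraph [DecidableEq V] (E K : Finset (V × V)) : Prop :=
  K ⊆ E ∧ ∀ e ∈ E, (e ∈ K ↔ drev e ∈ K)

/-- `L` is an orientation of the (symmetric) edge set `E`: it contains exactly one of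
`e` and `drev e` for every `e ∈ E`. -/
def IsOrientation [DecidableEq V] (E L : Finset (V × V)) : Prop :=
  L ⊆ E ∧ ∀ e ∈ E, (e ∈ L ↔ drev e ∉ L)

variable [Fintype V] [DecidableEq V]

/-- `f` is a `d`-flow on the directed subgraph `D` of the graph with edge set `E`. -/
def IsFlow (E D : Finset (V × V)) (d : V → ℤ) (f : V × V → ℝ) : Prop :=
  (∀ e ∈ E, 0 ≤ f e ∧ f e ≤ 1) ∧
  (∀ e, e ∉ D → f e = 0) ∧
  ∀ u : V,
    ((Finset.univ.filter (fun v : V => (u, v) ∈ E)).sum fun v => f (u, v)) -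
      ((Finset.univ.filter (fun v : V => (v, u) ∈ E)).sum fun v => f (v, u)) = (d u : ℝ)

/-- A `d`-flow exists on `D`. -/
def AdmitsFlow (E D : Finset (V × V)) (d : V → ℤ) : Prop :=
  ∃ f : V × V → ℝ, IsFlow E D d f

/-- The `w`-cost of a flow `f`. -/
def flowCost (E : Finset (V × V)) (w : V × V → ℝ) (f : V × V → ℝ) : ℝ :=
  ∑ e ∈ E, w e * f e

/-- `f` is a min-cost `d`-flow on `D`. -/
def IsMinCostFlow (E D : Finset (V × V)) (d : V → ℤ) (w : V × V → ℝ)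
    (f : V × V → ℝ) : Prop :=
  IsFlow E D d f ∧ ∀ g : V × V → ℝ, IsFlow E D d g → flowCost E w f ≤ flowCost E w g

/-- The `{0,1}`-valued function determined by a set of edges. -/
def ind (S : Finset (V × V)) : V × V → ℝ := fun e => if e ∈ S then 1 else 0

/-- `A` assigns to every flow-admitting `D ⊆ E` the (edge set of the) unique,
`{0,1}`-valued min-cost `d`-flow on `D`. -/
def GoodA (E : Finset (V × V)) (d : V → ℤ) (w : V × V → ℝ)
    (A : Finset (V × V) → Finset (V × V)) : Prop :=
  ∀ D : Finset (V × V), D ⊆ E → AdmitsFlow E D d →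
    IsMinCostFlow E D d w (ind (A D)) ∧
    ∀ f : V × V → ℝ, IsMinCostFlow E D d w f → f = ind (A D)

/-- `A(D) = A(D')`: both `D` and `D'` admit a `d`-flow and their unique min-cost
`d`-flows coincide.  (If one of them admits no `d`-flow this is false.) -/
def AEq (E : Finset (V × V)) (d : V → ℤ) (A : Finset (V × V) → Finset (V × V))
    (D D' : Finset (V × V)) : Prop :=
  AdmitsFlow E D d ∧ AdmitsFlow E D' d ∧ A D = A D'

/-- `D ⊕ e := (D ∪ {e}) \ {drev e}`. -/
def oplus (D : Finset (V × V)) (e : V × V) : Finset (V × V) := insert e D \ {drev e}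

/-- `D + e := D ∪ {e, drev e}`. -/
def padd (D : Finset (V × V)) (e : V × V) : Finset (V × V) := D ∪ {e, drev e}

/-- `D − e := D \ {e, drev e}`. -/
def psub (D : Finset (V × V)) (e : V × V) : Finset (V × V) := D \ {e, drev e}

/-- The representative of `{e, drev e}` lying in the reference orientation `E'`. -/
def chi (E' : Finset (V × V)) (e : V × V) : V × V := if e ∈ E' then e else drev e

/-- The map `φ_e`. -/
noncomputable def phiE (E : Finset (V × V)) (d : V → ℤ)
    (A : Finset (V × V) → Finset (V × V)) (E' : Finset (V × V))
    (e : V × V) (D : Finset (V × V)) : Finset (V × V) := by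
  classical
  exact
    if ¬ AEq E d A D (oplus D e) then oplus D (drev e)
    else if ¬ AEq E d A D (oplus D (drev e)) then oplus D e
    else if e ∈ D then oplus D (chi E' e) else oplus D (drev (chi E' e))

/-- The map `ψ_e`. -/
noncomputable def psiE (E : Finset (V × V)) (d : V → ℤ)
    (A : Finset (V × V) → Finset (V × V)) (E' : Finset (V × V))
    (e : V × V) (D : Finset (V × V)) : Finset (V × V) := by
  classical
  exact
    if ¬ AEq E d A D (padd D e) then psub D e
    else if ¬ AEq E d A D (psub D e) then padd D e
    else if chi E' e ∈ D then padd D e else psub D e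

end Defs

/-!
Let `a ∈ D`, `drev a ∉ D` and put `D⁺ = D + a`, `D⁻ = D − a`, `D° = D ⊕ drev a`. Each value
`X ∈ {D⁺, D⁻}` that `ψ_a D = ψ_{drev a} D` can take satisfies `X ⊕ a = D` and `X ⊕ drev a = D°`,
so `φ_a` and `φ_{drev a}` only compare `A` on the square `D⁻ ⊆ D, D° ⊆ D⁺`. Two facts about min-cost flows decide it:
removing edges the optimum does not use leaves it unchanged, and the optimum never uses both
`a` and `drev a` (cancelling that 2-cycle would be cheaper). Hence either
`A D⁻ = A D ≠ A D⁺ = A D°` (when `A D⁺` uses `drev a`), or `A D = A D⁺ ≠ A D°` and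
`A D⁻ ≠ A D` (when `A D` uses `a`), or all four agree. In the first two cases the branch taken by
`φ` returns `X ⊕ a = D`; in the last, `ψ` picks `D⁺` iff `χ a = a`, and `φ` returns
`D⁺ ⊕ χ a = D`, resp. `D⁻ ⊕ drev (χ a) = D`.
-/

section EdgeSets

variable {V : Type*}

@[simp]
lemma drev_drev (e : V × V) : drev (drev e) = e := rfl

lemma drev_involutive : Function.Involutive (drev : V × V → V × V) := drev_drev

variable [DecidableEq V]

lemma padd_drev (X : Finset (V × V)) (a : V × V) : padd X (drev a) = padd X a := by
  rw [padd, padd, drev_drev, Finset.pair_comm]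

lemma psub_drev (X : Finset (V × V)) (a : V × V) : psub X (drev a) = psub X a := by
  rw [psub, psub, drev_drev, Finset.pair_comm]

lemma oplus_padd (X : Finset (V × V)) (a : V × V) : oplus (padd X a) a = oplus X a := by
  ext x; simp only [oplus, padd, Finset.mem_sdiff, Finset.mem_insert, Finset.mem_union,
    Finset.mem_singleton]; tauto

lemma oplus_psub (X : Finset (V × V)) (a : V × V) : oplus (psub X a) a = oplus X a := by
  ext x; simp only [oplus, psub, Finset.mem_sdiff, Finset.mem_insert, Finset.mem_singleton]
  tauto

lemma subset_padd (X : Finset (V × V)) (a : V × V) : X ⊆ padd X a := Finset.subset_union_left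

lemma psub_padd (X : Finset (V × V)) (a : V × V) : psub (padd X a) a = psub X a := by
  ext x; simp only [psub, padd, Finset.mem_sdiff, Finset.mem_union]; tauto

lemma psub_subset_oplus_drev (X : Finset (V × V)) (a : V × V) :
    psub X a ⊆ oplus X (drev a) := by
  intro x; simp only [psub, oplus, Finset.mem_sdiff, Finset.mem_insert, Finset.mem_singleton,
    drev_drev]; tauto

lemma oplus_drev_subset_padd (X : Finset (V × V)) (a : V × V) :
    oplus X (drev a) ⊆ padd X a := by
  intro x; simp only [padd, oplus, Finset.mem_sdiff, Finset.mem_insert, Finset.mem_union,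
    Finset.mem_singleton]; tauto

lemma notMem_oplus_drev (X : Finset (V × V)) (a : V × V) : a ∉ oplus X (drev a) := by
  simp [oplus]

lemma padd_subset {E X : Finset (V × V)} (hE : ∀ e, e ∈ E ↔ drev e ∈ E) (hX : X ⊆ E)
    {a : V × V} (ha : a ∈ E) : padd X a ⊆ E :=
  Finset.union_subset hX (Finset.insert_subset ha (Finset.singleton_subset_iff.mpr ((hE a).mp ha)))

lemma oplus_eq_self {X : Finset (V × V)} {a : V × V} (ha : a ∈ X) (hra : drev a ∉ X) :
    oplus X a = X := by
  ext x; simp only [oplus, Finset.mem_sdiff, Finset.mem_insert, Finset.mem_singleton]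
  constructor
  · rintro ⟨rfl | hx, -⟩ <;> assumption
  · rintro hx; exact ⟨Or.inr hx, by rintro rfl; exact hra hx⟩

lemma chi_eq_or (E' : Finset (V × V)) (a : V × V) : chi E' a = a ∨ chi E' a = drev a := by
  unfold chi; split_ifs <;> simp

lemma chi_drev {E E' : Finset (V × V)} (hE' : IsOrientation E E') {a : V × V} (ha : a ∈ E) :
    chi E' (drev a) = chi E' a := by
  have h := hE'.2 a ha
  by_cases ha' : a ∈ E' <;> simp_all [chi]

end EdgeSets

section Costs

variable {V : Type*} {E : Finset (V × V)} {w f g : V × V → ℝ}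

lemma flowCost_midpoint :
    flowCost E w (fun x => (f x + g x) / 2) = (flowCost E w f + flowCost E w g) / 2 := by
  simp only [flowCost, Finset.sum_div, ← Finset.sum_add_distrib]
  exact Finset.sum_congr rfl fun x _ => by ring

variable [DecidableEq V]

lemma ind_injective : Function.Injective (ind : Finset (V × V) → V × V → ℝ) := by
  intro S T h
  ext x
  have hx := congrFun h x
  by_cases hS : x ∈ S <;> by_cases hT : x ∈ T <;> simp_all [ind]

lemma ind_pair_drev (a e : V × V) : ind {a, drev a} (drev e) = ind {a, drev a} e := by
  simp only [ind, Finset.mem_insert, Finset.mem_singleton, drev_involutive.eq_iff, drev_drev,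
    or_comm]

lemma flowCost_sub_mul (t : ℝ) (S : Finset (V × V)) :
    flowCost E w (fun x => f x - t * ind S x) = flowCost E w f - t * flowCost E w (ind S) := by
  simp only [flowCost, mul_sub, Finset.sum_sub_distrib, Finset.mul_sum]
  congr 1
  exact Finset.sum_congr rfl fun x _ => by ring

lemma flowCost_ind_pos (hw : ∀ e ∈ E, 0 < w e) {S : Finset (V × V)} {a : V × V}
    (haE : a ∈ E) (haS : a ∈ S) : 0 < flowCost E w (ind S) := by
  refine Finset.sum_pos' (fun x hx => mul_nonneg (hw x hx).le ?_)
    ⟨a, haE, by simpa [ind, haS] using hw a haE⟩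
  unfold ind; split_ifs <;> norm_num

end Costs

section Flows

variable {V : Type*} [Fintype V] [DecidableEq V] {E D D' : Finset (V × V)} {d : V → ℤ}
  {w f g : V × V → ℝ}

lemma IsFlow.mono (hf : IsFlow E D d f) (hDD' : D ⊆ D') : IsFlow E D' d f :=
  ⟨hf.1, fun e he => hf.2.1 e fun h => he (hDD' h), hf.2.2⟩

lemma AdmitsFlow.mono (hD : AdmitsFlow E D d) (hDD' : D ⊆ D') : AdmitsFlow E D' d :=
  hD.imp fun _ hf => hf.mono hDD'

lemma sum_out_eq_sum_in (hE : ∀ e, e ∈ E ↔ drev e ∈ E) (hg : ∀ e, g (drev e) = g e) (u : V) :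
    ∑ v ∈ Finset.univ.filter (fun v => (u, v) ∈ E), g (u, v) =
      ∑ v ∈ Finset.univ.filter (fun v => (v, u) ∈ E), g (v, u) :=
  Finset.sum_congr (Finset.filter_congr fun v _ => hE (u, v)) fun v _ => hg (v, u)

/-- The witness is `f` with the 2-cycle `a, drev a` cancelled. -/
lemma IsFlow.exists_flowCost_lt (hE : ∀ e, e ∈ E ↔ drev e ∈ E) (hw : ∀ e ∈ E, 0 < w e)
    (hf : IsFlow E D d f) {a : V × V} (haE : a ∈ E) (hpos : 0 < f a)
    (hfa : f (drev a) = f a) :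
    ∃ g, IsFlow E (psub D a) d g ∧ flowCost E w g < flowCost E w f := by
  set P : Finset (V × V) := {a, drev a}
  have hval : ∀ x, f x - f a * ind P x = if x ∈ P then 0 else f x := by
    intro x
    by_cases hx : x ∈ P
    · have : f x = f a := by
        rcases Finset.mem_insert.mp hx with rfl | hx
        · rfl
        · rw [Finset.mem_singleton.mp hx, hfa]
      simp [ind, hx, this]
    · simp [ind, hx]
  refine ⟨fun x => f x - f a * ind P x, ⟨fun x hx => ?_, fun x hx => ?_, fun u => ?_⟩, ?_⟩
  · simp only [hval]; split_ifs
    · norm_num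
    · exact hf.1 x hx
  · simp only [hval]; split_ifs with hP
    · rfl
    · exact hf.2.1 x fun hD => hx (Finset.mem_sdiff.mpr ⟨hD, hP⟩)
  · simp only [Finset.sum_sub_distrib, ← Finset.mul_sum]
    rw [sum_out_eq_sum_in hE (ind_pair_drev a) u, ← hf.2.2 u]
    ring
  · rw [flowCost_sub_mul]
    linarith [mul_pos hpos (flowCost_ind_pos hw haE (Finset.mem_insert_self a {drev a}))]

lemma IsFlow.midpoint (hf : IsFlow E D d f) (hg : IsFlow E D d g) :
    IsFlow E D d (fun x => (f x + g x) / 2) := by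
  refine ⟨fun x hx => ?_, fun x hx => ?_, fun u => ?_⟩
  · have := hf.1 x hx; have := hg.1 x hx
    constructor <;> linarith
  · simp [hf.2.1 x hx, hg.2.1 x hx]
  · simp only [← Finset.sum_div, Finset.sum_add_distrib]
    linarith [hf.2.2 u, hg.2.2 u]

end Flows

section MinCostFlows

variable {V : Type*} [Fintype V] [DecidableEq V] {E D D₁ D₂ : Finset (V × V)} {d : V → ℤ}
  {w : V × V → ℝ} {A : Finset (V × V) → Finset (V × V)}

lemma AEq.symm (h : AEq E d A D₁ D₂) : AEq E d A D₂ D₁ := ⟨h.2.1, h.1, h.2.2.symm⟩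

lemma AEq.trans {D₃ : Finset (V × V)} (h₁₂ : AEq E d A D₁ D₂) (h₂₃ : AEq E d A D₂ D₃) :
    AEq E d A D₁ D₃ :=
  ⟨h₁₂.1, h₂₃.2.1, h₁₂.2.2.trans h₂₃.2.2⟩

lemma GoodA.subset (hA : GoodA E d w A) (hD : D ⊆ E) (hDf : AdmitsFlow E D d) : A D ⊆ D := by
  intro x hx
  by_contra hxD
  simpa [ind, hx] using (hA D hD hDf).1.1.2.1 x hxD

lemma GoodA.aEq_of_subset (hA : GoodA E d w A) (h₁₂ : D₁ ⊆ D₂) (h₂ : D₂ ⊆ E)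
    (hf₂ : AdmitsFlow E D₂ d) (hA₂ : A D₂ ⊆ D₁) : AEq E d A D₁ D₂ := by
  obtain ⟨hmin₂, -⟩ := hA D₂ h₂ hf₂
  have hflow₁ : IsFlow E D₁ d (ind (A D₂)) := by
    refine ⟨hmin₂.1.1, fun x hx => ?_, hmin₂.1.2.2⟩
    simp [ind, show x ∉ A D₂ from fun h => hx (hA₂ h)]
  have hmin₁ : IsMinCostFlow E D₁ d w (ind (A D₂)) :=
    ⟨hflow₁, fun g hg => hmin₂.2 g (hg.mono h₁₂)⟩
  exact ⟨⟨_, hflow₁⟩, hf₂, ind_injective ((hA D₁ (h₁₂.trans h₂) ⟨_, hflow₁⟩).2 _ hmin₁).symm⟩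

lemma GoodA.drev_notMem (hA : GoodA E d w A) (hE : ∀ e, e ∈ E ↔ drev e ∈ E)
    (hw : ∀ e ∈ E, 0 < w e) (hD : D ⊆ E) (hDf : AdmitsFlow E D d) {a : V × V}
    (ha : a ∈ A D) : drev a ∉ A D := by
  intro hra
  obtain ⟨hmin, -⟩ := hA D hD hDf
  obtain ⟨g, hg, hlt⟩ := hmin.1.exists_flowCost_lt hE hw (hD (hA.subset hD hDf ha))
    (by simp [ind, ha]) (by simp [ind, ha, hra])
  exact (hmin.2 g (hg.mono Finset.sdiff_subset)).not_gt hlt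

/-- Otherwise the average of the min-cost flows on `D` and `D + a` carries `1/2` on both `a`
and `drev a`, and cancelling that 2-cycle gives a flow on `D` cheaper than the optimum. -/
lemma GoodA.notMem_of_drev_mem_padd (hA : GoodA E d w A) (hE : ∀ e, e ∈ E ↔ drev e ∈ E)
    (hw : ∀ e ∈ E, 0 < w e) (hD : D ⊆ E) (hDf : AdmitsFlow E D d) {a : V × V}
    (hra : drev a ∉ D) (hraA : drev a ∈ A (padd D a)) : a ∉ A D := by
  intro haA
  have haE : a ∈ E := hD (hA.subset hD hDf haA)
  have hDp : padd D a ⊆ E := padd_subset hE hD haE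
  have hDfp : AdmitsFlow E (padd D a) d := hDf.mono (subset_padd D a)
  obtain ⟨hmin, -⟩ := hA D hD hDf
  obtain ⟨hminp, -⟩ := hA (padd D a) hDp hDfp
  have haAp : a ∉ A (padd D a) := fun h => hA.drev_notMem hE hw hDp hDfp h hraA
  have hraA' : drev a ∉ A D := fun h => hra (hA.subset hD hDf h)
  obtain ⟨g, hg, hlt⟩ := (hmin.1.mono (subset_padd D a)).midpoint hminp.1
    |>.exists_flowCost_lt hE hw haE (by simp [ind, haA, haAp])
      (by simp [ind, haA, haAp, hraA, hraA'])
  have hgD : IsFlow E D d g := hg.mono (psub_padd D a ▸ Finset.sdiff_subset)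
  have hle : flowCost E w (ind (A (padd D a))) ≤ flowCost E w (ind (A D)) :=
    hminp.2 _ (hmin.1.mono (subset_padd D a))
  have := hmin.2 g hgD
  rw [flowCost_midpoint] at hlt
  linarith

lemma GoodA.aEq_psub_of_notMem (hA : GoodA E d w A) (hD : D ⊆ E) (hDf : AdmitsFlow E D d)
    {a : V × V} (ha : a ∉ A D) (hra : drev a ∉ D) : AEq E d A (psub D a) D := by
  refine hA.aEq_of_subset Finset.sdiff_subset hD hDf fun x hx => ?_
  have hxD := hA.subset hD hDf hx
  simp only [psub, Finset.mem_sdiff, Finset.mem_insert, Finset.mem_singleton]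
  exact ⟨hxD, by rintro (rfl | rfl) <;> contradiction⟩

lemma GoodA.aEq_psub_of_not_aEq_padd (hA : GoodA E d w A) (hE : ∀ e, e ∈ E ↔ drev e ∈ E)
    (hw : ∀ e ∈ E, 0 < w e) (hD : D ⊆ E) (hDf : AdmitsFlow E D d) {a : V × V} (haD : a ∈ D)
    (hra : drev a ∉ D) (h : ¬AEq E d A D (padd D a)) :
    AEq E d A (psub D a) D ∧ ¬AEq E d A (psub D a) (oplus D (drev a)) := by
  have hDp : padd D a ⊆ E := padd_subset hE hD (hD haD)
  have hDfp : AdmitsFlow E (padd D a) d := hDf.mono (subset_padd D a)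
  have hraA : drev a ∈ A (padd D a) := by
    by_contra hn
    refine h (hA.aEq_of_subset (subset_padd D a) hDp hDfp fun x hx => ?_)
    have hx' := hA.subset hDp hDfp hx
    simp only [padd, Finset.mem_union, Finset.mem_insert, Finset.mem_singleton] at hx'
    rcases hx' with hx' | rfl | rfl
    exacts [hx', haD, absurd hx hn]
  have haA : a ∉ A (padd D a) := by
    simpa using hA.drev_notMem hE hw hDp hDfp hraA
  have hm := hA.aEq_psub_of_notMem hD hDf (hA.notMem_of_drev_mem_padd hE hw hD hDf hra hraA) hra
  have hr : AEq E d A (oplus D (drev a)) (padd D a) := by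
    refine hA.aEq_of_subset (oplus_drev_subset_padd D a) hDp hDfp fun x hx => ?_
    have hx' := hA.subset hDp hDfp hx
    have hxa : x ≠ a := fun h => haA (h ▸ hx)
    simp only [padd, oplus, Finset.mem_union, Finset.mem_insert, Finset.mem_singleton,
      Finset.mem_sdiff, drev_drev] at hx' ⊢
    tauto
  exact ⟨hm, fun h' => h ⟨hDf, hDfp, hm.2.2.symm.trans (h'.2.2.trans hr.2.2)⟩⟩

lemma GoodA.not_aEq_oplus_of_not_aEq_psub (hA : GoodA E d w A)
    (hE : ∀ e, e ∈ E ↔ drev e ∈ E) (hD : D ⊆ E) {a : V × V} (haD : a ∈ D) (hra : drev a ∉ D)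
    (h₁ : AEq E d A D (padd D a))
    (h₂ : ¬AEq E d A D (psub D a)) : ¬AEq E d A (padd D a) (oplus D (drev a)) := by
  have haA : a ∈ A D := by
    by_contra hn
    exact h₂ (hA.aEq_psub_of_notMem hD h₁.1 hn hra).symm
  intro h
  have hDr : oplus D (drev a) ⊆ E :=
    (oplus_drev_subset_padd D a).trans (padd_subset hE hD (hD haD))
  refine notMem_oplus_drev D a (hA.subset hDr h.2.1 ?_)
  rwa [← h.2.2, ← h₁.2.2]

lemma GoodA.aEq_oplus_of_aEq_psub (hA : GoodA E d w A) (hE : ∀ e, e ∈ E ↔ drev e ∈ E)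
    (hD : D ⊆ E) {a : V × V} (haE : a ∈ E) (h₁ : AEq E d A D (padd D a))
    (h₂ : AEq E d A D (psub D a)) : AEq E d A (padd D a) (oplus D (drev a)) := by
  have hDp : padd D a ⊆ E := padd_subset hE hD haE
  refine (hA.aEq_of_subset (oplus_drev_subset_padd D a) hDp h₁.2.1 ?_).symm
  rw [← h₁.2.2, h₂.2.2]
  exact (hA.subset (Finset.sdiff_subset.trans hD) h₂.2.1).trans (psub_subset_oplus_drev D a)

end MinCostFlows

section PhiPsi

variable {V : Type*} [Fintype V] [DecidableEq V] {E X : Finset (V × V)} {d : V → ℤ}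
  {A : Finset (V × V) → Finset (V × V)} {E' : Finset (V × V)} {e : V × V}

lemma phiE_of_not_aEq (h : ¬AEq E d A X (oplus X e)) :
    phiE E d A E' e X = oplus X (drev e) := by
  simp [phiE, h]

lemma phiE_of_aEq_of_not_aEq (h₁ : AEq E d A X (oplus X e))
    (h₂ : ¬AEq E d A X (oplus X (drev e))) : phiE E d A E' e X = oplus X e := by
  simp [phiE, h₁, h₂]

lemma phiE_of_aEq_of_aEq (h₁ : AEq E d A X (oplus X e)) (h₂ : AEq E d A X (oplus X (drev e))) :
    phiE E d A E' e X = if e ∈ X then oplus X (chi E' e) else oplus X (drev (chi E' e)) := by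
  simp [phiE, h₁, h₂]

lemma psiE_of_not_aEq (h : ¬AEq E d A X (padd X e)) : psiE E d A E' e X = psub X e := by
  simp [psiE, h]

lemma psiE_of_aEq_of_not_aEq (h₁ : AEq E d A X (padd X e)) (h₂ : ¬AEq E d A X (psub X e)) :
    psiE E d A E' e X = padd X e := by
  simp [psiE, h₁, h₂]

lemma psiE_of_aEq_of_aEq (h₁ : AEq E d A X (padd X e)) (h₂ : AEq E d A X (psub X e)) :
    psiE E d A E' e X = if chi E' e ∈ X then padd X e else psub X e := by
  simp [psiE, h₁, h₂]

lemma psiE_drev (hE' : IsOrientation E E') (he : e ∈ E) :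
    psiE E d A E' (drev e) X = psiE E d A E' e X := by
  unfold psiE
  rw [padd_drev, psub_drev, chi_drev hE' he]

lemma phiE_pair_of_aEq_of_not_aEq {Y Y' : Finset (V × V)} (hY : oplus X e = Y)
    (hY' : oplus X (drev e) = Y') (h₁ : AEq E d A X Y) (h₂ : ¬AEq E d A X Y') :
    phiE E d A E' e X = Y ∧ phiE E d A E' (drev e) X = Y := by
  subst hY hY'
  exact ⟨phiE_of_aEq_of_not_aEq h₁ h₂, by rw [phiE_of_not_aEq h₂, drev_drev]⟩

lemma phiE_pair_of_aEq_of_aEq (hE' : IsOrientation E E') (he : e ∈ E) {Y Y' : Finset (V × V)}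
    (hY : oplus X e = Y) (hY' : oplus X (drev e) = Y') (h₁ : AEq E d A X Y)
    (h₂ : AEq E d A X Y') :
    phiE E d A E' e X = (if e ∈ X then oplus X (chi E' e) else oplus X (drev (chi E' e))) ∧
      phiE E d A E' (drev e) X =
        if drev e ∈ X then oplus X (chi E' e) else oplus X (drev (chi E' e)) := by
  subst hY hY'
  refine ⟨phiE_of_aEq_of_aEq h₁ h₂, ?_⟩
  rw [phiE_of_aEq_of_aEq h₂ (by rwa [drev_drev]), chi_drev hE' he]

end PhiPsi

lemma phiE_psiE_of_mem {V : Type*} [Fintype V] [DecidableEq V]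
    {E : Finset (V × V)} (hE : ∀ e, e ∈ E ↔ drev e ∈ E) {d : V → ℤ}
    {w : V × V → ℝ} (hw : ∀ e ∈ E, 0 < w e) {A : Finset (V × V) → Finset (V × V)}
    (hA : GoodA E d w A) {E' : Finset (V × V)} (hE' : IsOrientation E E')
    {D : Finset (V × V)} (hD : D ⊆ E) (hDf : AdmitsFlow E D d)
    {a : V × V} (haD : a ∈ D) (hra : drev a ∉ D) :
    phiE E d A E' a (psiE E d A E' a D) = D ∧
      phiE E d A E' (drev a) (psiE E d A E' a D) = D := by
  have hp₁ : oplus (padd D a) a = D := by rw [oplus_padd, oplus_eq_self haD hra]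
  have hm₁ : oplus (psub D a) a = D := by rw [oplus_psub, oplus_eq_self haD hra]
  have hp₂ : oplus (padd D a) (drev a) = oplus D (drev a) := by
    rw [← padd_drev, oplus_padd]
  have hm₂ : oplus (psub D a) (drev a) = oplus D (drev a) := by
    rw [← psub_drev, oplus_psub]
  by_cases hp : AEq E d A D (padd D a)
  swap
  · obtain ⟨hm, hm'⟩ := hA.aEq_psub_of_not_aEq_padd hE hw hD hDf haD hra hp
    rw [psiE_of_not_aEq hp]
    exact phiE_pair_of_aEq_of_not_aEq hm₁ hm₂ hm hm'
  by_cases hm : AEq E d A D (psub D a)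
  swap
  · rw [psiE_of_aEq_of_not_aEq hp hm]
    exact phiE_pair_of_aEq_of_not_aEq hp₁ hp₂ hp.symm
      (hA.not_aEq_oplus_of_not_aEq_psub hE hD haD hra hp hm)
  have hr := hA.aEq_oplus_of_aEq_psub hE hD (hD haD) hp hm
  rw [psiE_of_aEq_of_aEq hp hm]
  split_ifs with hχ
  · have hχa : chi E' a = a := (chi_eq_or E' a).resolve_right fun h => hra (by rwa [h] at hχ)
    obtain ⟨h₁, h₂⟩ := phiE_pair_of_aEq_of_aEq hE' (hD haD) hp₁ hp₂ hp.symm hr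
    rw [h₁, h₂, if_pos (by simp [padd]), if_pos (by simp [padd]), hχa, hp₁]
    exact ⟨rfl, rfl⟩
  · have hχa : chi E' a = drev a := (chi_eq_or E' a).resolve_left fun h => hχ (by rwa [h])
    obtain ⟨h₁, h₂⟩ := phiE_pair_of_aEq_of_aEq hE' (hD haD) hm₁ hm₂ hm.symm
      (hm.symm.trans (hp.trans hr))
    rw [h₁, h₂, if_neg (by simp [psub]), if_neg (by simp [psub]), hχa, drev_drev, hm₁]
    exact ⟨rfl, rfl⟩

theorem phiE_psiE_of_one_general
    {V : Type*} [Fintype V] [DecidableEq V]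
    (E : Finset (V × V)) (hE_symm : ∀ e, e ∈ E ↔ drev e ∈ E)
    (d : V → ℤ)
    (w : V × V → ℝ) (hw : ∀ e ∈ E, 0 < w e)
    (A : Finset (V × V) → Finset (V × V)) (hA : GoodA E d w A)
    (E' : Finset (V × V)) (hE' : IsOrientation E E')
    (D : Finset (V × V)) (hD : D ⊆ E) (hDf : AdmitsFlow E D d)
    (e : V × V)
    (hDe : e ∈ D ↔ drev e ∉ D) :
    phiE E d A E' e (psiE E d A E' e D) = D := by
  by_cases heD : e ∈ D
  · exact (phiE_psiE_of_mem hE_symm hw hA hE' hD hDf heD (hDe.mp heD)).1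
  · have hreD : drev e ∈ D := not_not.mp (mt hDe.mpr heD)
    have h := (phiE_psiE_of_mem hE_symm hw hA hE' hD hDf hreD (by rwa [drev_drev])).2
    rwa [drev_drev, psiE_drev hE' ((hE_symm e).mpr (hD hreD))] at h

theorem phiE_psiE_of_one
    {V : Type*} [Fintype V] [DecidableEq V]
    (E : Finset (V × V)) (hE_symm : ∀ e, e ∈ E ↔ drev e ∈ E)
    (hE_ne : ∀ e ∈ E, e.1 ≠ e.2)
    (d : V → ℤ) (hd : ∑ u : V, d u = 0)
    (w : V × V → ℝ) (hw : ∀ e ∈ E, 0 < w e)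
    (A : Finset (V × V) → Finset (V × V)) (hA : GoodA E d w A)
    (E' : Finset (V × V)) (hE' : IsOrientation E E')
    (D : Finset (V × V)) (hD : D ⊆ E) (hDf : AdmitsFlow E D d)
    (e : V × V) (he : e ∈ E)
    (hDe : e ∈ D ↔ drev e ∉ D) :
    phiE E d A E' e (psiE E d A E' e D) = D :=
  phiE_psiE_of_one_general E hE_symm d w hw A hA E' hE' D hD hDf e hDe
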